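/- Let Cₙ (n ≥ 3) be the cycle graph with vertices v₁, …, vₙ, indices taken modulo n, where vᵢ is adjacent to vᵢ₊₁. If n is even, then 𝒩(Cₙ) = { {v_{i+1}, …, v_{i+n/2}} : 1 ≤ i ≤ n }, and if n is odd, then 𝒩(Cₙ) = { {v_{i+1}, …, v_{i+(n+1)/2}} : 1 ≤ i ≤ n }; that is, the maximal nongenerating sets of Cₙ are exactly the sets of ⌈n/2⌉ consecutive vertices. -/

import Mathlib

open SimpleGraph

variable {V : Type*}

/-- `w` lies on a geodesic (shortest path) between `u` and `v` in `G`. -/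
def OnGeodesic (G : SimpleGraph V) (u v w : V) : Prop :=
  ∃ p : G.Walk u v, p.IsPath ∧ p.length = G.dist u v ∧ w ∈ p.support

/-- A set of vertices is geodetically convex if it contains every vertex lying on a
geodesic between two of its elements. -/
def GeoConvex (G : SimpleGraph V) (S : Set V) : Prop :=
  ∀ ⦃u⦄, u ∈ S → ∀ ⦃v⦄, v ∈ S → ∀ ⦃w⦄, OnGeodesic G u v w → w ∈ S

/-- The geodetic convex hull of a set of vertices: the smallest geodetically convex
set containing it. -/
def geoHull (G : SimpleGraph V) (S : Set V) : Set V :=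
  ⋂₀ {K : Set V | S ⊆ K ∧ GeoConvex G K}

/-- A set of vertices is generating if its convex hull is the whole vertex set. -/
def GeoGenerates (G : SimpleGraph V) (S : Set V) : Prop :=
  geoHull G S = Set.univ

/-- A maximal nongenerating set: a nongenerating set not properly contained in any
nongenerating set.  The family of these is `𝒩(G)`. -/
def MaxNongen (G : SimpleGraph V) (N : Set V) : Prop :=
  ¬ GeoGenerates G N ∧ ∀ M : Set V, ¬ GeoGenerates G M → N ⊆ M → N = M

/-- The Frattini subset `Φ(G)`: the intersection of all maximal nongenerating sets. -/
def geoFrattini (G : SimpleGraph V) : Set V :=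
  ⋂₀ {N : Set V | MaxNongen G N}

/-- A vertex is simplicial if its neighbors induce a complete graph. -/
def Simplicial (G : SimpleGraph V) (v : V) : Prop :=
  ∀ ⦃u w : V⦄, G.Adj v u → G.Adj v w → u ≠ w → G.Adj u w

/-- A minimal generating set: a generating set no proper subset of which generates.
The family of these is `𝒢(G)`. -/
def MinGen (G : SimpleGraph V) (L : Set V) : Prop :=
  GeoGenerates G L ∧ ∀ M : Set V, GeoGenerates G M → M ⊆ L → M = L

/-!
Offsets from any base vertex turn distances in `Cₙ` into `min (|p - q|) (n - |p - q|)`.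
An arc of `⌈n/2⌉ = (n + 1) / 2` consecutive vertices is convex, since between two of its
vertices the way through the arc is strictly shorter than the way around, and it misses a vertex,
so it is nongenerating. Conversely, if a convex set misses `z`, no two of its vertices are at
least `n/2` apart measured away from `z` (else `z` would lie on a geodesic between them), so the
set fits into the arc of length `(n + 1) / 2` starting at its vertex nearest to `z` on that side.
Arcs of equal length are incomparable, hence they are exactly the maximal nongenerating sets.
-/

section Hull

variable {G : SimpleGraph V}

lemma onGeodesic_iff_dist_add_dist_eq (hG : G.Preconnected) {u v w : V} :
    OnGeodesic G u v w ↔ G.dist u w + G.dist w v = G.dist u v := by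
  classical
  constructor
  · rintro ⟨p, -, hp, hw⟩
    have hsplit : (p.takeUntil w hw).length + (p.dropUntil w hw).length = p.length := by
      rw [← Walk.length_append, Walk.take_spec]
    have := dist_le (p.takeUntil w hw)
    have := dist_le (p.dropUntil w hw)
    have := (p.takeUntil w hw).reachable.dist_triangle_left v
    omega
  · intro h
    obtain ⟨q, hq⟩ := (hG u w).exists_walk_length_eq_dist
    obtain ⟨r, hr⟩ := (hG w v).exists_walk_length_eq_dist
    have hlen : (q.append r).length = G.dist u v := by rw [Walk.length_append, hq, hr, h]
    exact ⟨q.append r, (q.append r).isPath_of_length_eq_dist hlen, hlen,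
      (Walk.mem_support_append_iff _ _).2 (Or.inl q.end_mem_support)⟩

lemma subset_geoHull (S : Set V) : S ⊆ geoHull G S :=
  fun _ hx _ hK => hK.1 hx

lemma geoConvex_geoHull (S : Set V) : GeoConvex G (geoHull G S) :=
  fun _ hu _ hv _ hw K hK => hK.2 (hu K hK) (hv K hK) hw

lemma geoHull_subset {S K : Set V} (hSK : S ⊆ K) (hK : GeoConvex G K) : geoHull G S ⊆ K :=
  Set.sInter_subset_of_mem ⟨hSK, hK⟩

lemma not_geoGenerates_iff {S : Set V} :
    ¬ GeoGenerates G S ↔ ∃ K, S ⊆ K ∧ GeoConvex G K ∧ K ≠ Set.univ := by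
  constructor
  · exact fun h => ⟨geoHull G S, subset_geoHull S, geoConvex_geoHull S, h⟩
  · rintro ⟨K, hSK, hK, hne⟩ h
    exact hne (Set.eq_univ_of_univ_subset (h ▸ geoHull_subset hSK hK))

lemma maxNongen_iff_of_cover {ι : Type*} {A : ι → Set V} (hA : ∀ i, ¬ GeoGenerates G (A i))
    (hcover : ∀ S, ¬ GeoGenerates G S → ∃ i, S ⊆ A i)
    (hanti : ∀ i j, A i ⊆ A j → A i = A j) {N : Set V} :
    MaxNongen G N ↔ ∃ i, N = A i := by
  constructor
  · rintro ⟨hN, hmax⟩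
    obtain ⟨i, hi⟩ := hcover N hN
    exact ⟨i, hmax _ (hA i) hi⟩
  · rintro ⟨i, rfl⟩
    refine ⟨hA i, fun M hM hiM => ?_⟩
    obtain ⟨j, hj⟩ := hcover M hM
    exact hiM.antisymm (hanti i j (hiM.trans hj) ▸ hj)

end Hull

section CycleDist

variable {n : ℕ} [NeZero n]

lemma Fin.val_sub_add_val_sub (a b c : Fin n) :
    (a - b).val + (b - c).val = (a - c).val ∨ (a - b).val + (b - c).val = (a - c).val + n := by
  have h := Fin.val_add_eq_ite (a - b) (b - c)
  rw [sub_add_sub_cancel] at h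
  split_ifs at h <;> omega

lemma Fin.val_sub_add_val_sub_swap (a b : Fin n) :
    (a - b).val + (b - a).val = 0 ∨ (a - b).val + (b - a).val = n := by
  simpa only [sub_self, Fin.val_zero, zero_add] using Fin.val_sub_add_val_sub a b a

lemma cycleGraph_dist_le_val_sub (a b : Fin n) : (cycleGraph n).dist a b ≤ (b - a).val := by
  induction hm : (b - a).val generalizing b with
  | zero =>
    rw [Fin.val_eq_zero_iff, sub_eq_zero] at hm
    simp [hm]
  | succ m ih =>
    have hn : 1 < n := by have := (b - a).isLt; omega
    have hone : (1 : Fin n).val = 1 := by rw [Fin.val_one', Nat.mod_eq_of_lt hn]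
    have hprev : (b - 1 - a).val = m := by
      rw [sub_right_comm, Fin.val_sub_one_of_ne_zero (by simp [← Fin.val_ne_iff, hm]), hm,
        Nat.add_sub_cancel]
    have hadj : (cycleGraph n).Adj (b - 1) b := by
      rw [cycleGraph_adj', sub_sub_cancel, hone]
      exact Or.inr rfl
    calc (cycleGraph n).dist a b
        ≤ (cycleGraph n).dist a (b - 1) + (cycleGraph n).dist (b - 1) b :=
          hadj.reachable.dist_triangle_right a
      _ ≤ m + 1 := add_le_add (ih _ hprev) (dist_eq_one_iff_adj.2 hadj).le

lemma min_val_sub_le_length {a b : Fin n} (p : (cycleGraph n).Walk a b) :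
    min (a - b).val (b - a).val ≤ p.length := by
  induction p with
  | nil => simp
  | @cons a c b hac q ih =>
    rw [cycleGraph_adj'] at hac
    rw [min_le_iff] at ih
    rw [Walk.length_cons, min_le_iff]
    have := Fin.val_sub_add_val_sub a c b
    have := Fin.val_sub_add_val_sub_swap a c
    have := Fin.val_sub_add_val_sub_swap a b
    have := Fin.val_sub_add_val_sub_swap c b
    omega

lemma cycleGraph_dist (a b : Fin n) :
    (cycleGraph n).dist a b = min (a - b).val (b - a).val := by
  refine le_antisymm (le_min ?_ (cycleGraph_dist_le_val_sub a b)) ?_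
  · exact dist_comm (G := cycleGraph n) ▸ cycleGraph_dist_le_val_sub b a
  · obtain ⟨p, hp⟩ := (cycleGraph_preconnected a b).exists_walk_length_eq_dist
    exact hp ▸ min_val_sub_le_length p

lemma cycleGraph_dist_eq_offset (i a b : Fin n) :
    (cycleGraph n).dist a b =
      min ((a - i).val - (b - i).val + ((b - i).val - (a - i).val))
        (n - ((a - i).val - (b - i).val + ((b - i).val - (a - i).val))) := by
  rw [cycleGraph_dist]
  have := Fin.val_sub_add_val_sub a b i
  have := Fin.val_sub_add_val_sub b a i
  have := Fin.val_sub_add_val_sub_swap a b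
  omega

end CycleDist

section CycleArc

variable {n : ℕ}

/-- The arc `{i + 1, …, i + k}` of the cycle. -/
def cycleArc (i : Fin n) (k : ℕ) : Set (Fin n) :=
  {x | 1 ≤ (x - i).val ∧ (x - i).val ≤ k}

lemma mem_cycleArc {i x : Fin n} {k : ℕ} :
    x ∈ cycleArc i k ↔ 1 ≤ (x - i).val ∧ (x - i).val ≤ k :=
  Iff.rfl

variable [NeZero n]

lemma setOf_eq_cycleArc (i : Fin n) (k : ℕ) :
    {x : Fin n | ∃ j : Fin n, 1 ≤ (j : ℕ) ∧ (j : ℕ) ≤ k ∧ x = i + j} = cycleArc i k := by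
  ext x
  constructor
  · rintro ⟨j, h1, h2, rfl⟩
    rw [mem_cycleArc, add_sub_cancel_left]
    exact ⟨h1, h2⟩
  · rintro ⟨h1, h2⟩
    exact ⟨x - i, h1, h2, (add_sub_cancel i x).symm⟩

lemma notMem_cycleArc_self (i : Fin n) (k : ℕ) : i ∉ cycleArc i k := by
  simp [mem_cycleArc]

lemma geoConvex_cycleArc {k : ℕ} (hk : 2 * k ≤ n + 1) (i : Fin n) :
    GeoConvex (cycleGraph n) (cycleArc i k) := by
  intro u hu v hv w hw
  rw [onGeodesic_iff_dist_add_dist_eq cycleGraph_preconnected, cycleGraph_dist_eq_offset i,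
    cycleGraph_dist_eq_offset i, cycleGraph_dist_eq_offset i] at hw
  rw [mem_cycleArc] at hu hv ⊢
  have := (w - i).isLt
  omega

lemma not_geoGenerates_cycleArc {k : ℕ} (hk : 2 * k ≤ n + 1) (i : Fin n) :
    ¬ GeoGenerates (cycleGraph n) (cycleArc i k) :=
  not_geoGenerates_iff.2 ⟨_, subset_rfl, geoConvex_cycleArc hk i,
    (Set.ne_univ_iff_exists_notMem _).2 ⟨i, notMem_cycleArc_self i k⟩⟩

lemma eq_of_cycleArc_subset {k : ℕ} (hk₀ : 1 ≤ k) (hkn : k < n) (hk : 2 * k ≤ n + 1)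
    {i j : Fin n} (h : cycleArc i k ⊆ cycleArc j k) : i = j := by
  set x := i + ⟨1, by omega⟩
  set y := i + ⟨k, hkn⟩
  have hx : (x - i).val = 1 := by simp [x]
  have hy : (y - i).val = k := by simp [y]
  have hxj := mem_cycleArc.1 (h ((mem_cycleArc (x := x)).2 ⟨hx.ge, by omega⟩))
  have hyj := mem_cycleArc.1 (h ((mem_cycleArc (x := y)).2 ⟨by omega, hy.le⟩))
  have := Fin.val_sub_add_val_sub y x i
  have := Fin.val_sub_add_val_sub y x j
  have := Fin.val_sub_add_val_sub x i j
  have := (y - x).isLt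
  have := (i - j).isLt
  rw [← sub_eq_zero, ← Fin.val_eq_zero_iff]
  omega

lemma exists_subset_cycleArc_of_geoConvex {K : Set (Fin n)} (hK : GeoConvex (cycleGraph n) K)
    {z : Fin n} (hz : z ∉ K) : ∃ i, K ⊆ cycleArc i ((n + 1) / 2) := by
  rcases K.eq_empty_or_nonempty with rfl | hne
  · exact ⟨z, Set.empty_subset _⟩
  obtain ⟨m, hm, hmin⟩ := K.exists_min_image (fun x => (x - z).val) K.toFinite hne
  have hoff : ∀ x ∈ K, 1 ≤ (x - z).val := fun x hx => by
    rw [Nat.one_le_iff_ne_zero, Fin.val_ne_zero_iff, sub_ne_zero]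
    rintro rfl
    exact hz hx
  have hspread : ∀ x ∈ K, 2 * ((x - z).val - (m - z).val) < n := by
    intro x hx
    -- otherwise the way from `m` to `x` through `z` is a geodesic
    have hzx : ¬ OnGeodesic (cycleGraph n) m x z := fun h => hz (hK hm hx h)
    rw [onGeodesic_iff_dist_add_dist_eq cycleGraph_preconnected, cycleGraph_dist_eq_offset z,
      cycleGraph_dist_eq_offset z, cycleGraph_dist_eq_offset z, sub_self, Fin.val_zero] at hzx
    have := hoff m hm
    have := hoff x hx
    have := hmin x hx
    have := (x - z).isLt
    omega
  have hn : 1 < n := by have := hoff m hm; have := (m - z).isLt; omega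
  refine ⟨m - 1, fun x hx => ?_⟩
  have := Fin.val_sub_add_val_sub x m z
  have := Fin.val_sub_add_val_sub x m (m - 1)
  rw [sub_sub_cancel, Fin.val_one', Nat.mod_eq_of_lt hn] at this
  have := hmin x hx
  have := hspread x hx
  have := (x - m).isLt
  have := (x - (m - 1)).isLt
  rw [mem_cycleArc]
  omega

lemma exists_subset_cycleArc_of_not_geoGenerates {S : Set (Fin n)}
    (hS : ¬ GeoGenerates (cycleGraph n) S) : ∃ i, S ⊆ cycleArc i ((n + 1) / 2) := by
  obtain ⟨K, hSK, hK, hKne⟩ := not_geoGenerates_iff.1 hS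
  obtain ⟨z, hz⟩ := (Set.ne_univ_iff_exists_notMem K).1 hKne
  obtain ⟨i, hi⟩ := exists_subset_cycleArc_of_geoConvex hK hz
  exact ⟨i, hSK.trans hi⟩

end CycleArc

/-- The maximal nongenerating sets of the cycle graph `Cₙ` (`n ≥ 3`) are
exactly the sets of `⌈n/2⌉ = (n+1)/2` consecutive vertices
`{v_{i+1}, …, v_{i+⌈n/2⌉}}`. -/
theorem maxNongen_cycleGraph_iff (n : ℕ) (hn : 3 ≤ n) (N : Set (Fin n)) :
    MaxNongen (SimpleGraph.cycleGraph n) N ↔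
      ∃ i : Fin n, N = {x : Fin n |
        ∃ j : Fin n, 1 ≤ (j : ℕ) ∧ (j : ℕ) ≤ (n + 1) / 2 ∧ x = i + j} := by
  have : NeZero n := ⟨by omega⟩
  simp only [setOf_eq_cycleArc]
  exact maxNongen_iff_of_cover (not_geoGenerates_cycleArc (by omega))
    (fun _ => exists_subset_cycleArc_of_not_geoGenerates)
    fun _ _ h => congrArg (cycleArc · _) <|
      eq_of_cycleArc_subset (by omega) (by omega) (by omega) h
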